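/- arXiv:1812.04308 — 2 statements merged into one kernel-verified Lean document; each statement's English description precedes it below -/
import Mathlib

section
/- Let (X, f) be a measurable dynamical system, P a finite measurable partition of X, (μ_n) a sequence of probability measures on X, and ν_n = (1/n) Σ_{k=0}^{n-1} f^k_* μ_n. Then for all positive integers m and n, (1/m) H_{ν_n}(P^m) ≥ (1/n)(H_{μ_n}(P^n) − 3 m log(#P)), where P^m = ⋁_{k=0}^{m-1} f^{-k} P and H_μ(Q) = −Σ_{A∈Q} μ(A) log μ(A). -/
open Filter Topology MeasureTheory
open scoped ENNReal

/-- The static entropy `H_μ(P^n)` of the iterated partition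
`P^n = ⋁_{k=0}^{n-1} f^{-k} P`, computed as the sum of `-t log t` over the measures of the
cells `⋂_{k<n} f^{-k} A_k`, `(A_k) ∈ P^n`. -/
noncomputable def iterPartitionEntropy {X : Type*} [MeasurableSpace X]
    (μ : Measure X) (f : X → X) (P : Finset (Set X)) (n : ℕ) : ℝ :=
  ∑ c : Fin n → P, Real.negMulLog ((μ (⋂ k : Fin n, f^[(k : ℕ)] ⁻¹' ((c k : Set X)))).toReal)

/-!
Fix `j < m` and cut the orbit segment `[0, n)` into the initial piece `[0, j)`, the blocks
`[j + t m, j + (t + 1) m)` and a final piece shorter than `m`. Since the entropy of a join is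
at most the sum of the entropies, `H_μ(P^n)` is bounded by the block entropies
`H_{f^s_* μ}(P^m)` plus `2 m log #P` for the two short pieces. Averaging over `j < m` uses
every start `s < n` at most once, and concavity of entropy in the measure bounds
`Σ_{s<n} H_{f^s_* μ}(P^m)` by `n H_ν(P^m)`.
-/

open Real Finset

section FiniteEntropy
variable {ι α β : Type*}

theorem sum_mul_sum_negMulLog_le [Fintype α] (s : Finset ι) {w : ι → ℝ} {v : ι → α → ℝ}
    (hw : ∀ i ∈ s, 0 ≤ w i) (hw1 : ∑ i ∈ s, w i = 1) (hv : ∀ i ∈ s, ∀ a, 0 ≤ v i a) :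
    ∑ i ∈ s, w i * ∑ a, negMulLog (v i a) ≤ ∑ a, negMulLog (∑ i ∈ s, w i * v i a) := by
  simp_rw [mul_sum]
  rw [sum_comm]
  gcongr with a
  simpa using concaveOn_negMulLog.le_map_sum hw hw1 fun i hi => hv i hi a

theorem sum_negMulLog_le_log_card [Fintype α] {p : α → ℝ} (hp : ∀ a, 0 ≤ p a)
    (hp1 : ∑ a, p a = 1) : ∑ a, negMulLog (p a) ≤ log (Fintype.card α) := by
  set N : ℝ := ↑(Fintype.card α)
  have hN : 0 < N := by
    have : Nonempty α := by
      by_contra h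
      simp [not_nonempty_iff.mp h] at hp1
    exact Nat.cast_pos.mpr Fintype.card_pos
  have hw1 : ∑ _a : α, N⁻¹ = 1 := by simp [N, hN.ne']
  have h : N⁻¹ * ∑ a, negMulLog (p a) ≤ N⁻¹ * log N := by
    have := concaveOn_negMulLog.le_map_sum (t := univ) (fun _ _ => inv_nonneg.mpr hN.le) hw1
      fun a _ => hp a
    simpa [← mul_sum, hp1, negMulLog, log_inv] using this
  exact le_of_mul_le_mul_left h (inv_pos.mpr hN)

theorem sum_sum_negMulLog_le_marginals [Fintype α] [Fintype β] {p : α → β → ℝ}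
    (hp : ∀ a b, 0 ≤ p a b) (hp1 : ∑ a, ∑ b, p a b = 1) :
    ∑ a, ∑ b, negMulLog (p a b) ≤
      ∑ a, negMulLog (∑ b, p a b) + ∑ b, negMulLog (∑ a, p a b) := by
  set p₁ : α → ℝ := fun a => ∑ b, p a b
  have hp₁ : ∀ a, 0 ≤ p₁ a := fun a => sum_nonneg fun b _ => hp a b
  -- the conditional distribution; its junk value `0` on null rows is harmless
  set r : α → β → ℝ := fun a b => p a b / p₁ a
  have hpr : ∀ a b, p a b = p₁ a * r a b := by
    intro a b
    by_cases h : p₁ a = 0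
    · simp [h, (sum_eq_zero_iff_of_nonneg fun b _ => hp a b).mp h b (mem_univ b)]
    · simp only [r]; field_simp
  have hchain : ∀ a, ∑ b, negMulLog (p a b) =
      negMulLog (p₁ a) + p₁ a * ∑ b, negMulLog (r a b) := by
    intro a
    by_cases h : p₁ a = 0
    · simp [hpr a, h]
    · simp_rw [hpr a, negMulLog_mul, sum_add_distrib, ← sum_mul, ← mul_sum]
      rw [← sum_div, div_self h, one_mul]
  calc ∑ a, ∑ b, negMulLog (p a b)
      = ∑ a, negMulLog (p₁ a) + ∑ a, p₁ a * ∑ b, negMulLog (r a b) := by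
        rw [← sum_add_distrib]; exact sum_congr rfl fun a _ => hchain a
    _ ≤ ∑ a, negMulLog (p₁ a) + ∑ b, negMulLog (∑ a, p₁ a * r a b) := by
        gcongr
        exact sum_mul_sum_negMulLog_le univ (fun a _ => hp₁ a) hp1
          fun a _ b => div_nonneg (hp a b) (hp₁ a)
    _ = ∑ a, negMulLog (p₁ a) + ∑ b, negMulLog (∑ a, p a b) := by
        simp_rw [← hpr]

end FiniteEntropy

section BlockEstimate
-- `E s t` stands for the entropy of the window `⋁_{s ≤ k < s + t} f^{-k} P`.
variable {E : ℕ → ℕ → ℝ}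

theorem le_sum_blocks_add (hadd : ∀ s t u, E s (t + u) ≤ E s t + E (s + t) u)
    (s m q r : ℕ) :
    E s (q * m + r) ≤ ∑ t ∈ range q, E (s + t * m) m + E (s + q * m) r := by
  induction q generalizing r with
  | zero => simp
  | succ q ih =>
    calc E s ((q + 1) * m + r) = E s (q * m + (m + r)) := by ring_nf
      _ ≤ ∑ t ∈ range q, E (s + t * m) m + E (s + q * m) (m + r) := ih (m + r)
      _ ≤ ∑ t ∈ range q, E (s + t * m) m + (E (s + q * m) m + E (s + q * m + m) r) := by
        gcongr; exact hadd _ _ _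
      _ = ∑ t ∈ range (q + 1), E (s + t * m) m + E (s + (q + 1) * m) r := by
        rw [sum_range_succ, add_one_mul, ← add_assoc s]; ring

theorem le_sum_blocks_from_add {c : ℝ} (hE : ∀ s t, 0 ≤ E s t) (hc : ∀ s t, E s t ≤ t * c)
    (hadd : ∀ s t u, E s (t + u) ≤ E s t + E (s + t) u) {m j : ℕ} (hj : j < m) (n : ℕ) :
    E 0 n ≤ ∑ t ∈ range ((n - j) / m), E (j + t * m) m + 2 * m * c := by
  have hc0 : 0 ≤ c := by simpa using (hE 0 1).trans (hc 0 1)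
  have hcm : ∀ {s t}, t ≤ m → E s t ≤ m * c := fun {s t} ht =>
    (hc s t).trans (by gcongr)
  rcases le_or_gt j n with hjn | hnj
  · have hsplit : n = j + ((n - j) / m * m + (n - j) % m) := by
      rw [Nat.div_add_mod']; omega
    calc E 0 n ≤ E 0 j + E j ((n - j) / m * m + (n - j) % m) := by
          conv_lhs => rw [hsplit]
          simpa using hadd 0 j _
      _ ≤ m * c + (∑ t ∈ range ((n - j) / m), E (j + t * m) m + m * c) := by
          gcongr
          · exact hcm hj.le
          · refine (le_sum_blocks_add hadd j m _ _).trans ?_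
            gcongr
            exact hcm (Nat.mod_lt _ (by omega)).le
      _ = _ := by ring
  · rw [Nat.sub_eq_zero_of_le hnj.le, Nat.zero_div, sum_range_zero, zero_add]
    have := hcm (s := 0) (hnj.trans hj).le
    nlinarith

theorem sum_range_sum_range_div_le {g : ℕ → ℝ} (hg : ∀ s, 0 ≤ g s) {m : ℕ} (hm : 0 < m)
    (n : ℕ) : ∑ j ∈ range m, ∑ t ∈ range ((n - j) / m), g (j + t * m) ≤ ∑ s ∈ range n, g s := by
  rw [← sum_fiberwise_of_maps_to (fun s _ => mem_range.mpr (Nat.mod_lt s hm)) g]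
  refine sum_le_sum fun j hj => ?_
  have hinj : Function.Injective fun t => j + t * m :=
    (add_right_injective j).comp (mul_left_injective₀ hm.ne')
  rw [← sum_image fun x _ y _ h => hinj h]
  refine sum_le_sum_of_subset_of_nonneg ?_ fun s _ _ => hg s
  intro s hs
  obtain ⟨t, ht, rfl⟩ := mem_image.mp hs
  have ht' : (t + 1) * m ≤ n - j := (Nat.le_div_iff_mul_le hm).mp (mem_range.mp ht)
  simp only [mem_filter, mem_range, Nat.add_mul_mod_self_right,
    Nat.mod_eq_of_lt (mem_range.mp hj), and_true]
  rw [add_one_mul] at ht'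
  omega

theorem mul_le_sum_range_add {c : ℝ} (hE : ∀ s t, 0 ≤ E s t) (hc : ∀ s t, E s t ≤ t * c)
    (hadd : ∀ s t u, E s (t + u) ≤ E s t + E (s + t) u) {m : ℕ} (hm : 0 < m) (n : ℕ) :
    m * E 0 n ≤ ∑ s ∈ range n, E s m + 2 * m ^ 2 * c :=
  calc m * E 0 n = ∑ j ∈ range m, E 0 n := by simp
    _ ≤ ∑ j ∈ range m, (∑ t ∈ range ((n - j) / m), E (j + t * m) m + 2 * m * c) :=
        sum_le_sum fun j hj => le_sum_blocks_from_add hE hc hadd (mem_range.mp hj) n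
    _ ≤ ∑ s ∈ range n, E s m + 2 * m ^ 2 * c := by
        rw [sum_add_distrib, sum_const, card_range, nsmul_eq_mul]
        have := sum_range_sum_range_div_le (fun s => hE s m) hm n
        nlinarith

end BlockEstimate

section IterCell
open Set
variable {X : Type*} {f : X → X} {P : Finset (Set X)}

def iterCell (f : X → X) (P : Finset (Set X)) {n : ℕ} (c : Fin n → P) : Set X :=
  ⋂ k : Fin n, f^[k] ⁻¹' c k

theorem iterCell_append {t u : ℕ} (a : Fin t → P) (b : Fin u → P) :
    iterCell f P (Fin.append a b) = iterCell f P a ∩ f^[t] ⁻¹' iterCell f P b := by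
  ext x
  simp [iterCell, Fin.forall_fin_add, ← Function.iterate_add_apply, add_comm]

theorem pairwise_disjoint_iterCell (hP : (P : Set (Set X)).PairwiseDisjoint id) (n : ℕ) :
    Pairwise fun c c' : Fin n → P => Disjoint (iterCell f P c) (iterCell f P c') := by
  intro c c' hne
  obtain ⟨k, hk⟩ := Function.ne_iff.mp hne
  exact ((hP (c k).2 (c' k).2 (Subtype.coe_injective.ne hk)).preimage _).mono
    (iInter_subset _ k) (iInter_subset _ k)

theorem iUnion_iterCell (hP : ⋃ A ∈ P, A = univ) (n : ℕ) :
    ⋃ c : Fin n → P, iterCell f P c = univ := by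
  refine eq_univ_of_forall fun x => ?_
  have hmem : ∀ y, ∃ A : P, y ∈ (A : Set X) := fun y => by
    have : y ∈ ⋃ A ∈ P, A := hP ▸ mem_univ y
    simpa using this
  choose A hA using hmem
  exact mem_iUnion.mpr ⟨fun k => A (f^[k] x), mem_iInter.mpr fun k => hA _⟩

variable [MeasurableSpace X]

theorem measurableSet_iterCell (hf : Measurable f) (hP : ∀ A ∈ P, MeasurableSet A) {n : ℕ}
    (c : Fin n → P) : MeasurableSet (iterCell f P c) :=
  .iInter fun k => hf.iterate k (hP _ (c k).2)

theorem sum_measure_iterCell (hf : Measurable f) (hPmeas : ∀ A ∈ P, MeasurableSet A)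
    (hPdisj : (P : Set (Set X)).PairwiseDisjoint id) (hPcover : ⋃ A ∈ P, A = univ)
    (μ : Measure X) (n : ℕ) : ∑ c : Fin n → P, μ (iterCell f P c) = μ univ := by
  rw [← iUnion_iterCell (f := f) hPcover n, measure_iUnion (pairwise_disjoint_iterCell hPdisj n)
    (measurableSet_iterCell hf hPmeas), tsum_fintype]

end IterCell

section IterPartitionEntropy
variable {X : Type*} [MeasurableSpace X] {f : X → X} {P : Finset (Set X)}

theorem iterPartitionEntropy_eq_sum_iterCell (μ : Measure X) (n : ℕ) :
    iterPartitionEntropy μ f P n = ∑ c : Fin n → P, negMulLog (μ (iterCell f P c)).toReal :=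
  rfl

theorem iterPartitionEntropy_nonneg (μ : Measure X) [IsZeroOrProbabilityMeasure μ] (n : ℕ) :
    0 ≤ iterPartitionEntropy μ f P n :=
  sum_nonneg fun _ _ => negMulLog_nonneg ENNReal.toReal_nonneg measureReal_le_one

theorem iterPartitionEntropy_le_mul_log_card (hf : Measurable f)
    (hPmeas : ∀ A ∈ P, MeasurableSet A) (hPdisj : (P : Set (Set X)).PairwiseDisjoint id)
    (hPcover : ⋃ A ∈ P, A = Set.univ) (μ : Measure X) [IsProbabilityMeasure μ] (n : ℕ) :
    iterPartitionEntropy μ f P n ≤ n * log #P := by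
  have h1 : ∑ c : Fin n → P, (μ (iterCell f P c)).toReal = 1 := by
    rw [← ENNReal.toReal_sum fun c _ => measure_ne_top μ _,
      sum_measure_iterCell hf hPmeas hPdisj hPcover, measure_univ, ENNReal.toReal_one]
  calc iterPartitionEntropy μ f P n ≤ log (Fintype.card (Fin n → P)) :=
        sum_negMulLog_le_log_card (fun _ => ENNReal.toReal_nonneg) h1
    _ = n * log #P := by simp [Real.log_pow]

theorem iterPartitionEntropy_add_le (hf : Measurable f)
    (hPmeas : ∀ A ∈ P, MeasurableSet A) (hPdisj : (P : Set (Set X)).PairwiseDisjoint id)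
    (hPcover : ⋃ A ∈ P, A = Set.univ) (μ : Measure X) [IsProbabilityMeasure μ] (t u : ℕ) :
    iterPartitionEntropy μ f P (t + u) ≤
      iterPartitionEntropy μ f P t + iterPartitionEntropy (μ.map f^[t]) f P u := by
  have hsum := sum_measure_iterCell hf hPmeas hPdisj hPcover
  have hmeas : ∀ {n} (c : Fin n → P), MeasurableSet (iterCell f P c) :=
    measurableSet_iterCell hf hPmeas
  set p : (Fin t → P) → (Fin u → P) → ℝ :=
    fun a b => (μ (iterCell f P a ∩ f^[t] ⁻¹' iterCell f P b)).toReal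
  have hrow : ∀ a, ∑ b, p a b = (μ (iterCell f P a)).toReal := by
    intro a
    rw [← ENNReal.toReal_sum fun _ _ => measure_ne_top μ _]
    congr 1
    have := hsum ((μ.restrict (iterCell f P a)).map f^[t]) u
    simpa [Measure.map_apply (hf.iterate t) (hmeas _), Measure.restrict_apply' (hmeas a),
      Measure.map_apply (hf.iterate t) MeasurableSet.univ, Set.inter_comm] using this
  have hcol : ∀ b, ∑ a, p a b = ((μ.map f^[t]) (iterCell f P b)).toReal := by
    intro b
    rw [← ENNReal.toReal_sum fun _ _ => measure_ne_top μ _]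
    congr 1
    have := hsum (μ.restrict (f^[t] ⁻¹' iterCell f P b)) t
    simpa [Measure.map_apply (hf.iterate t) (hmeas _), Measure.restrict_apply (hmeas _)]
      using this
  have hp1 : ∑ a, ∑ b, p a b = 1 := by
    simp_rw [hrow]
    rw [← ENNReal.toReal_sum fun _ _ => measure_ne_top μ _, hsum, measure_univ,
      ENNReal.toReal_one]
  calc iterPartitionEntropy μ f P (t + u) = ∑ a, ∑ b, negMulLog (p a b) := by
        rw [iterPartitionEntropy_eq_sum_iterCell, ← (Fin.appendEquiv t u).sum_comp,
          Fintype.sum_prod_type]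
        refine sum_congr rfl fun a _ => sum_congr rfl fun b _ => ?_
        change negMulLog (μ (iterCell f P (Fin.append a b))).toReal = _
        rw [iterCell_append]
    _ ≤ _ := sum_sum_negMulLog_le_marginals (fun _ _ => ENNReal.toReal_nonneg) hp1
    _ = _ := by simp only [hrow, hcol, iterPartitionEntropy_eq_sum_iterCell]

theorem iterPartitionEntropy_map_iterate_add_le (hf : Measurable f)
    (hPmeas : ∀ A ∈ P, MeasurableSet A) (hPdisj : (P : Set (Set X)).PairwiseDisjoint id)
    (hPcover : ⋃ A ∈ P, A = Set.univ) (μ : Measure X) [IsProbabilityMeasure μ] (s t u : ℕ) :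
    iterPartitionEntropy (μ.map f^[s]) f P (t + u) ≤
      iterPartitionEntropy (μ.map f^[s]) f P t + iterPartitionEntropy (μ.map f^[s + t]) f P u := by
  have := Measure.isProbabilityMeasure_map (μ := μ) (hf.iterate s).aemeasurable
  have h := iterPartitionEntropy_add_le hf hPmeas hPdisj hPcover (μ.map f^[s]) t u
  rwa [Measure.map_map (hf.iterate t) (hf.iterate s), ← Function.iterate_add, add_comm t s] at h

theorem sum_iterPartitionEntropy_le_card_mul {ι : Type*} (s : Finset ι) (μ : ι → Measure X)
    [∀ i, IsFiniteMeasure (μ i)] (n : ℕ) :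
    ∑ i ∈ s, iterPartitionEntropy (μ i) f P n ≤
      #s * iterPartitionEntropy ((#s : ℝ≥0∞)⁻¹ • ∑ i ∈ s, μ i) f P n := by
  rcases s.eq_empty_or_nonempty with rfl | hs
  · simp
  have hN : (0 : ℝ) < #s := by exact_mod_cast hs.card_pos
  have hw1 : ∑ _i ∈ s, (#s : ℝ)⁻¹ = 1 := by simp [hN.ne']
  have hmix : ∀ c : Fin n → P, (((#s : ℝ≥0∞)⁻¹ • ∑ i ∈ s, μ i) (iterCell f P c)).toReal =
      ∑ i ∈ s, (#s : ℝ)⁻¹ * (μ i (iterCell f P c)).toReal := by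
    intro c
    rw [Measure.smul_apply, Measure.finsetSum_apply, smul_eq_mul, ENNReal.toReal_mul,
      ENNReal.toReal_sum fun i _ => measure_ne_top _ _, mul_sum, ENNReal.toReal_inv,
      ENNReal.toReal_natCast]
  have h := sum_mul_sum_negMulLog_le s (fun _ _ => inv_nonneg.mpr hN.le) hw1
    fun i _ (c : Fin n → P) => ENNReal.toReal_nonneg (a := μ i (iterCell f P c))
  simp only [← hmix, ← mul_sum, ← iterPartitionEntropy_eq_sum_iterCell] at h
  calc ∑ i ∈ s, iterPartitionEntropy (μ i) f P n
      = #s * ((#s : ℝ)⁻¹ * ∑ i ∈ s, iterPartitionEntropy (μ i) f P n) := by field_simp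
    _ ≤ _ := by gcongr

end IterPartitionEntropy

/-- Misiurewicz's entropy estimate: if `ν_n = (1/n) Σ_{k<n} f^k_* μ_n`, then for all
`m, n ≥ 1`, `(1/m) H_{ν_n}(P^m) ≥ (1/n) (H_{μ_n}(P^n) − 3 m log #P)`. -/
theorem misiurewicz_entropy_estimate {X : Type*} [MeasurableSpace X]
    (f : X → X) (hf : Measurable f)
    (P : Finset (Set X)) (hPmeas : ∀ A ∈ P, MeasurableSet A)
    (hPdisj : (P : Set (Set X)).PairwiseDisjoint id)
    (hPcover : ⋃ A ∈ P, A = Set.univ)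
    (μ : ℕ → Measure X) (hμ : ∀ n, IsProbabilityMeasure (μ n))
    (ν : ℕ → Measure X)
    (hν : ∀ n : ℕ, ν n = ((n : ℝ≥0∞))⁻¹ • ∑ k ∈ Finset.range n, (μ n).map f^[k])
    (m n : ℕ) (hm : 0 < m) (hn : 0 < n) :
    (1 / (m : ℝ)) * iterPartitionEntropy (ν n) f P m ≥
      (1 / (n : ℝ)) * (iterPartitionEntropy (μ n) f P n - 3 * m * Real.log P.card) := by
  have := hμ n
  have hprob (s : ℕ) : IsProbabilityMeasure ((μ n).map f^[s]) :=
    Measure.isProbabilityMeasure_map (hf.iterate s).aemeasurable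
  have hblocks := mul_le_sum_range_add (c := log #P)
    (fun s t => iterPartitionEntropy_nonneg ((μ n).map f^[s]) t)
    (fun s => iterPartitionEntropy_le_mul_log_card hf hPmeas hPdisj hPcover ((μ n).map f^[s]))
    (iterPartitionEntropy_map_iterate_add_le hf hPmeas hPdisj hPcover (μ n)) hm n
  have hconcave := sum_iterPartitionEntropy_le_card_mul (f := f) (P := P) (range n)
    (fun k => (μ n).map f^[k]) m
  rw [card_range, ← hν] at hconcave
  simp only [Function.iterate_zero, Measure.map_id] at hblocks
  have hlog := log_natCast_nonneg #P
  have hn' : (0 : ℝ) < n := by exact_mod_cast hn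
  have hm' : (0 : ℝ) < m := by exact_mod_cast hm
  rw [ge_iff_le, one_div_mul_eq_div, one_div_mul_eq_div, div_le_div_iff₀ hn' hm']
  nlinarith
end

section
/- Let (M, f) be a continuous dynamical system on a compact metric space. The map pw : M → K(P(M)) sending x to the set pw(x) of weak-* accumulation points of the empirical measures (μ_n^x)_n is Borel measurable, where K(P(M)) is the space of nonempty compact subsets of the space of Borel probability measures on M, with the Hausdorff metric. -/
/-!
The closures `T_N(x)` of the tails `{μ_n^x : n ≥ N}` form a decreasing sequence of compact sets
whose intersection is `pw(x)`; by compactness of `P(M)` they converge to `pw(x)` in the Hausdorff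
metric. Each `x ↦ T_N(x)` is measurable: the empirical measures depend continuously on `x`, and
the Hausdorff distance from `T_N(x)` to a fixed compact set is a countable supremum of countable
infima of distances to a countable dense subset. A pointwise limit of measurable maps into a
metrizable space is measurable.
-/

open Filter Topology MeasureTheory TopologicalSpace Metric Set
open scoped ENNReal

theorem measurable_of_measurable_dist {α β : Type*} [MeasurableSpace α] [MetricSpace β]
    [SecondCountableTopology β] [MeasurableSpace β] [BorelSpace β] {g : α → β}
    (h : ∀ y, Measurable fun x => dist (g x) y) : Measurable g := by
  refine measurable_of_isOpen fun U hU => ?_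
  let balls : {p : β × ℝ // ball p.1 p.2 ⊆ U} → Set β := fun p => ball p.1.1 p.1.2
  obtain ⟨T, hTc, hTU⟩ := isOpen_iUnion_countable balls fun _ => isOpen_ball
  have hU_eq : ⋃ p ∈ T, balls p = U := by
    refine hTU.trans (subset_antisymm (iUnion_subset fun p => p.2) fun y hy => ?_)
    obtain ⟨r, hr, hrU⟩ := Metric.isOpen_iff.1 hU y hy
    exact mem_iUnion.2 ⟨⟨(y, r), hrU⟩, mem_ball_self hr⟩
  rw [← hU_eq, preimage_iUnion₂]
  exact .biUnion hTc fun p _ => measurableSet_lt (h p.1.1) measurable_const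

theorem measurable_hausdorffEDist_range {α X ι : Type*} [MeasurableSpace α]
    [PseudoEMetricSpace X] [Countable ι] {v : ι → α → X}
    (hv : ∀ i y, Measurable fun a => edist (v i a) y) {t : Set X} (ht : IsSeparable t) :
    Measurable fun a => hausdorffEDist (range fun i => v i a) t := by
  obtain ⟨c, hct, hc, htc⟩ := ht.exists_countable_dense_subset
  have hclosure : closure c = closure t :=
    subset_antisymm (closure_mono hct) (closure_minimal htc isClosed_closure)
  have hEDist_eq : ∀ a, hausdorffEDist (range fun i => v i a) t =
      (⨆ i, ⨅ y ∈ c, edist (v i a) y) ⊔ ⨆ y ∈ c, ⨅ i, edist y (v i a) := by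
    intro a
    rw [← hausdorffEDist_closure_right, ← hclosure, hausdorffEDist_closure_right,
      hausdorffEDist_def, iSup_range]
    simp only [infEDist, iInf_range]
  simp_rw [hEDist_eq]
  refine .sup (.iSup fun i => .biInf c hc fun y _ => hv i y) (.biSup c hc fun y _ => ?_)
  exact .iInf fun i => by simpa only [edist_comm] using hv i y

theorem tendsto_hausdorffEDist_iInter_of_antitone {X : Type*} [PseudoEMetricSpace X]
    [CompactSpace X] {F : ℕ → Set X} (hF : Antitone F) (hFc : ∀ n, IsClosed (F n)) :
    Tendsto (fun n => hausdorffEDist (F n) (⋂ n, F n)) atTop (𝓝 0) := by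
  refine ENNReal.tendsto_nhds_zero.2 fun ε hε => ?_
  -- the `G n` are compact, decreasing and have empty intersection, so one of them is empty
  let G : ℕ → Set X := fun n => F n ∩ {x | ε ≤ infEDist x (⋂ n, F n)}
  have hG_closed : ∀ n, IsClosed (G n) :=
    fun n => (hFc n).inter (isClosed_le continuous_const continuous_infEDist)
  have hG_empty : ⋂ n, G n = ∅ := by
    refine eq_empty_of_forall_notMem fun x hx => ?_
    have hxF : x ∈ ⋂ n, F n := mem_iInter.2 fun n => (mem_iInter.1 hx n).1
    have := (mem_iInter.1 hx 0).2
    rw [mem_ofPred_eq, infEDist_zero_of_mem hxF] at this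
    exact hε.ne' (nonpos_iff_eq_zero.1 this)
  obtain ⟨N, hN⟩ : ∃ N, G N = ∅ := by
    by_contra! hne
    exact (IsCompact.nonempty_iInter_of_sequence_nonempty_isCompact_isClosed G
      (fun n => inter_subset_inter_left _ (hF n.le_succ)) hne
      (hG_closed 0).isCompact hG_closed).ne_empty hG_empty
  filter_upwards [eventually_ge_atTop N] with n hn
  refine hausdorffEDist_le_of_infEDist (fun x hx => ?_) fun x hx => ?_
  · by_contra! hlt
    exact (eq_empty_iff_forall_notMem.1 hN) x ⟨hF hn hx, hlt.le⟩
  · rw [infEDist_zero_of_mem (mem_iInter.1 hx n)]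
    exact zero_le

theorem MeasureTheory.ProbabilityMeasure.continuous_of_eq_smul_sum_dirac {α Ω ι : Type*} [TopologicalSpace α]
    [TopologicalSpace Ω] [MeasurableSpace Ω] [OpensMeasurableSpace Ω]
    {μ : α → ProbabilityMeasure Ω} {c : ℝ≥0∞} (hc : c ≠ ∞) (s : Finset ι) {g : ι → α → Ω}
    (hg : ∀ i, Continuous (g i))
    (hμ : ∀ x, (μ x : Measure Ω) = c • ∑ i ∈ s, Measure.dirac (g i x)) :
    Continuous μ := by
  refine ProbabilityMeasure.continuous_iff_forall_continuous_lintegral.2 fun f => ?_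
  have hf : Measurable fun ω => (f ω : ℝ≥0∞) := by fun_prop
  simp_rw [hμ, lintegral_smul_measure, lintegral_finsetSum_measure, lintegral_dirac' _ hf]
  exact (ENNReal.continuous_const_mul hc).comp
    (continuous_finsetSum _ fun i _ => ENNReal.continuous_coe.comp (f.continuous.comp (hg i)))

/-- For a continuous map `f` on a compact metric space `M`, the map `x ↦ pw(x)` sending a
point to the (nonempty compact) set of weak-* accumulation points of its empirical measures,
viewed as a map into the space of nonempty compact subsets of `P(M)` with the Hausdorff
metric (for a metric on `P(M)` compatible with the weak-* topology), is Borel measurable. -/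
theorem pw_map_borel_measurable
    {M : Type*} [MetricSpace M] [CompactSpace M] [MeasurableSpace M] [BorelSpace M]
    (f : M → M) (hf : Continuous f)
    (emp : M → ℕ → ProbabilityMeasure M)
    (hemp : ∀ (x : M) (n : ℕ), (emp x n : Measure M) =
      (((n + 1 : ℕ) : ℝ≥0∞))⁻¹ • ∑ k ∈ Finset.range (n + 1), Measure.dirac (f^[k] x))
    (pwK : M → NonemptyCompacts (ProbabilityMeasure M))
    (hpwK : ∀ x : M, (pwK x : Set (ProbabilityMeasure M)) =
      {ν : ProbabilityMeasure M | MapClusterPt ν atTop (emp x)}) :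
    letI : MetricSpace (ProbabilityMeasure M) :=
      TopologicalSpace.metrizableSpaceMetric (ProbabilityMeasure M)
    letI : MeasurableSpace (NonemptyCompacts (ProbabilityMeasure M)) :=
      borel (NonemptyCompacts (ProbabilityMeasure M))
    Measurable pwK := by
  let : MetricSpace (ProbabilityMeasure M) :=
    TopologicalSpace.metrizableSpaceMetric (ProbabilityMeasure M)
  let : MeasurableSpace (NonemptyCompacts (ProbabilityMeasure M)) :=
    borel (NonemptyCompacts (ProbabilityMeasure M))
  have : BorelSpace (NonemptyCompacts (ProbabilityMeasure M)) := ⟨rfl⟩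
  have hemp_cont : ∀ n, Continuous fun x => emp x n := fun n =>
    ProbabilityMeasure.continuous_of_eq_smul_sum_dirac (by simp) _ (fun k => hf.iterate k)
      fun x => hemp x n
  let tail : ℕ → M → NonemptyCompacts (ProbabilityMeasure M) := fun N x =>
    ⟨⟨closure (emp x '' Ici N), isClosed_closure.isCompact⟩,
      (nonempty_Ici.image _).closure⟩
  have htail_meas : ∀ N, Measurable (tail N) := by
    refine fun N => measurable_of_measurable_dist fun K => ?_
    simp only [NonemptyCompacts.dist_eq, hausdorffDist, tail, NonemptyCompacts.coe_mk,
      Compacts.coe_mk, hausdorffEDist_closure_left, image_eq_range]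
    exact (measurable_hausdorffEDist_range
      (fun (i : Ici N) K => ((hemp_cont i).edist continuous_const).measurable)
      K.isCompact.isSeparable).ennreal_toReal
  have htail_tendsto : ∀ x, Tendsto (fun N => tail N x) atTop (𝓝 (pwK x)) := by
    intro x
    have hpw : (pwK x : Set (ProbabilityMeasure M)) = ⋂ N, closure (emp x '' Ici N) := by
      ext ν; simp [hpwK, mapClusterPt_atTop_iff_forall_mem_closure]
    rw [tendsto_iff_edist_tendsto_0]
    change Tendsto (fun N => hausdorffEDist (closure (emp x '' Ici N)) (pwK x : Set _)) atTop (𝓝 0)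
    rw [hpw]
    exact tendsto_hausdorffEDist_iInter_of_antitone
      (fun m n hmn => closure_mono (image_mono (Ici_subset_Ici.2 hmn))) fun _ => isClosed_closure
  exact measurable_of_tendsto_metrizable htail_meas (tendsto_pi_nhds.2 htail_tendsto)
end
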